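/- Any algebraic curvature tensor R ∈ R(u(p,q)) (with n = p+q ≥ 2) decomposes uniquely as R = B − (1/(2(n+2)))·(Ric − (s/(2n))g) ∧_J g − (s/(4n(n+1)))·(Id/2) ∧_J g, where Ric is the Ricci contraction of R, s its trace, B is a curvature tensor in R(u(p,q)) whose Ricci contraction vanishes, and H ∧_J g is the Kähler wedge. Equivalently R = B + K ∧_J g with K = −(1/(2(n+2)))(Ric − (s/(4(n+1)))g). -/

import Mathlib

open LinearMap Finset Module

variable {V : Type*} [AddCommGroup V] [Module ℝ V]

/-- The endomorphism `(X ∧ Y) : Z ↦ g(X,Z)•Y - g(Y,Z)•X`. -/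
noncomputable def wdg (g : LinearMap.BilinForm ℝ V) (X Y : V) : V →ₗ[ℝ] V :=
  (g X).smulRight Y - (g Y).smulRight X

/-- `A` belongs to `so(p,q)`: it is skew-adjoint with respect to `g`. -/
def skewAdj (g : LinearMap.BilinForm ℝ V) (A : V →ₗ[ℝ] V) : Prop :=
  ∀ X Y : V, g (A X) Y + g X (A Y) = 0

/-- Nondegeneracy of a bilinear form. -/
def Nondeg (g : LinearMap.BilinForm ℝ V) : Prop :=
  ∀ X : V, (∀ Y : V, g X Y = 0) → X = 0

/-- `R` is an algebraic curvature tensor: bilinear, skew, `so(p,q)`-valued,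
and satisfying the first Bianchi identity. -/
def isCurv (g : LinearMap.BilinForm ℝ V) (R : V → V → V →ₗ[ℝ] V) : Prop :=
  (∀ (a : ℝ) (X X' Y : V), R (a • X + X') Y = a • R X Y + R X' Y) ∧
  (∀ X Y : V, R X Y = - R Y X) ∧
  (∀ X Y : V, skewAdj g (R X Y)) ∧
  (∀ X Y Z : V, R X Y Z + R Y Z X + R Z X Y = 0)

/-- `(H ∧ g)(X,Y) = HX ∧ Y + X ∧ HY`. -/
noncomputable def hwdg (g : LinearMap.BilinForm ℝ V) (H : V →ₗ[ℝ] V) (X Y : V) : V →ₗ[ℝ] V :=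
  wdg g (H X) Y + wdg g X (H Y)

/-- Ricci contraction `Ric(R)(X,Y) = tr(Z ↦ R(Z,X)Y)`, computed in a basis. -/
noncomputable def ricciOf {ι : Type*} [Fintype ι] (b : Basis ι ℝ V)
    (R : V → V → V →ₗ[ℝ] V) (X Y : V) : ℝ :=
  ∑ i, b.coord i (R (b i) X Y)

/-- The inverse Gram matrix `g^{ij}` of the basis `b`. -/
noncomputable def gramInv {ι : Type*} [Fintype ι] [DecidableEq ι]
    (g : LinearMap.BilinForm ℝ V) (b : Basis ι ℝ V) : Matrix ι ι ℝ :=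
  (Matrix.of fun i j => g (b i) (b j))⁻¹

/-- Scalar curvature: the `g`-trace of the Ricci contraction. -/
noncomputable def scalarOf {ι : Type*} [Fintype ι] [DecidableEq ι]
    (g : LinearMap.BilinForm ℝ V) (b : Basis ι ℝ V) (R : V → V → V →ₗ[ℝ] V) : ℝ :=
  ∑ i, ∑ j, gramInv g b i j * ricciOf b R (b i) (b j)

/-- The trace `tr_{1,5}(S)(X) = g^{ij} S_{X_i}(X, X_j)`. -/
noncomputable def tr15 {ι : Type*} [Fintype ι] [DecidableEq ι]
    (g : LinearMap.BilinForm ℝ V) (b : Basis ι ℝ V)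
    (S : V → V → V → V →ₗ[ℝ] V) (X : V) : V →ₗ[ℝ] V :=
  ∑ i, ∑ j, gramInv g b i j • S (b i) X (b j)

/-- `Ric̃(P) = g^{ij} P(X_i) X_j`. -/
noncomputable def ricTilde {ι : Type*} [Fintype ι] [DecidableEq ι]
    (g : LinearMap.BilinForm ℝ V) (b : Basis ι ℝ V)
    (P : V → V →ₗ[ℝ] V) : V :=
  ∑ i, ∑ j, gramInv g b i j • P (b i) (b j)

/-- Membership in `P(so(p,q))`: linear, `so(p,q)`-valued, cyclic identity. -/
def isP (g : LinearMap.BilinForm ℝ V) (P : V → V →ₗ[ℝ] V) : Prop :=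
  (∀ (a : ℝ) (X X' : V), P (a • X + X') = a • P X + P X') ∧
  (∀ X : V, skewAdj g (P X)) ∧
  (∀ X Y Z : V, g (P X Y) Z + g (P Y Z) X + g (P Z X) Y = 0)

/-- `X ∧_J Y = X ∧ Y + JX ∧ JY`. -/
noncomputable def wdgJ (g : LinearMap.BilinForm ℝ V) (J : V →ₗ[ℝ] V) (X Y : V) : V →ₗ[ℝ] V :=
  wdg g X Y + wdg g (J X) (J Y)

/-- The Kähler wedge `(H ∧_J g)(X,Y) = HX ∧_J Y + X ∧_J HY + 2g(HJX,Y)J + 2g(JX,Y)JH`. -/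
noncomputable def hwdgJ (g : LinearMap.BilinForm ℝ V) (J : V →ₗ[ℝ] V) (H : V →ₗ[ℝ] V)
    (X Y : V) : V →ₗ[ℝ] V :=
  wdgJ g J (H X) Y + wdgJ g J X (H Y) + (2 * g (H (J X)) Y) • J + (2 * g (J X) Y) • (J ∘ₗ H)


/-!
Put `B = R - K ∧_J g`. Whenever `K` is `g`-symmetric and commutes with `J`, `K ∧_J g` is again
a `J`-invariant algebraic curvature tensor, and its Ricci contraction is
`-(2n + 4) g(K·,·) - (tr K) g`: the contributions of `J` and `JK` drop out because skew-adjoint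
maps are traceless. The Ricci endomorphism `A` of `R` is symmetric, and it commutes with `J`
because pair symmetry gives `R(JX, JY) = R(X, Y)`; so `K` may be taken affine in `A`, and
solving for the vanishing of `Ric(B)` yields the stated `K`. Uniqueness is forced by
`R = B + K ∧_J g`.
-/

section GramMatrix

variable {ι : Type*} [Fintype ι] [DecidableEq ι] {g : LinearMap.BilinForm ℝ V} (b : Basis ι ℝ V)

theorem gramInv_mul_gram (hnd : Nondeg g) :
    gramInv g b * Matrix.of (fun i j => g (b i) (b j)) = 1 := by
  have := Module.Finite.of_basis b
  have hdet : (Matrix.of fun i j => g (b i) (b j)).det ≠ 0 := by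
    convert (LinearMap.BilinForm.nondegenerate_iff_det_ne_zero b).mp (.ofSeparatingLeft hnd)
    ext
    simp [LinearMap.BilinForm.toMatrix_apply]
  exact Matrix.nonsing_inv_mul _ (isUnit_iff_ne_zero.mpr hdet)

theorem gramInv_comm (hsymm : ∀ X Y : V, g X Y = g Y X) (i j : ι) :
    gramInv g b i j = gramInv g b j i :=
  (Matrix.IsSymm.inv (Matrix.IsSymm.ext fun i j => hsymm (b j) (b i))).apply j i

theorem coord_eq_sum_gramInv (hnd : Nondeg g) (i : ι) (v : V) :
    b.coord i v = ∑ j, gramInv g b i j * g (b j) v := by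
  have hgram : (fun j => g (b j) v) = (Matrix.of (fun i j => g (b i) (b j))).mulVec (b.repr v) := by
    ext j
    conv_lhs => rw [← b.sum_repr v]
    simp [-Basis.sum_repr, Matrix.mulVec, dotProduct, mul_comm]
  have := congrFun (congrArg (fun M => M.mulVec (b.repr v)) (gramInv_mul_gram b hnd)) i
  simp only [← Matrix.mulVec_mulVec, ← hgram, Matrix.one_mulVec] at this
  simpa [Matrix.mulVec, dotProduct] using this.symm

theorem trace_eq_sum_coord (f : V →ₗ[ℝ] V) :
    trace ℝ V f = ∑ i, b.coord i (f (b i)) := by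
  rw [trace_eq_matrix_trace ℝ b f, Matrix.trace]
  simp [LinearMap.toMatrix_apply]

theorem trace_eq_sum_gramInv (hnd : Nondeg g) (f : V →ₗ[ℝ] V) :
    trace ℝ V f = ∑ i, ∑ j, gramInv g b i j * g (b j) (f (b i)) := by
  simp only [trace_eq_sum_coord b, coord_eq_sum_gramInv b hnd]

theorem skewAdj.trace_eq_zero [FiniteDimensional ℝ V] (hsymm : ∀ X Y : V, g X Y = g Y X)
    (hnd : Nondeg g) {f : V →ₗ[ℝ] V} (hf : skewAdj g f) : trace ℝ V f = 0 := by
  let b := Module.finBasis ℝ V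
  have hswap : ∀ i j, g (b j) (f (b i)) = -g (b i) (f (b j)) := fun i j => by
    rw [← hsymm (f (b j)), eq_neg_iff_add_eq_zero, add_comm, hf]
  have h : trace ℝ V f = - trace ℝ V f := by
    calc trace ℝ V f = ∑ i, ∑ j, gramInv g b i j * g (b j) (f (b i)) :=
          trace_eq_sum_gramInv b hnd f
      _ = ∑ j, ∑ i, -(gramInv g b j i * g (b i) (f (b j))) := by
          rw [Finset.sum_comm]
          refine Finset.sum_congr rfl fun j _ => Finset.sum_congr rfl fun i _ => ?_
          rw [gramInv_comm b hsymm i j, hswap i j]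
          ring
      _ = - trace ℝ V f := by
          simp only [Finset.sum_neg_distrib, trace_eq_sum_gramInv b hnd f]
  linarith

end GramMatrix

theorem eq_of_forall_apply_eq {g : LinearMap.BilinForm ℝ V} (hnd : Nondeg g) {u v : V}
    (h : ∀ W : V, g u W = g v W) : u = v :=
  sub_eq_zero.mp <| hnd _ fun W => by rw [map_sub, LinearMap.sub_apply, h, sub_self]

theorem skewAdj_of_J {g : LinearMap.BilinForm ℝ V} {J : V →ₗ[ℝ] V}
    (hJ2 : ∀ X : V, J (J X) = -X) (hJg : ∀ X Y : V, g (J X) (J Y) = g X Y) : skewAdj g J :=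
  fun X Y => by rw [← hJg X (J Y), hJ2, map_neg, add_neg_cancel]

theorem trace_eq_of_comp_J_eq [FiniteDimensional ℝ V] {J : V →ₗ[ℝ] V}
    (hJ2 : ∀ X : V, J (J X) = -X) {f f' : V →ₗ[ℝ] V} (h : f' ∘ₗ J = J ∘ₗ f) :
    trace ℝ V f' = trace ℝ V f := by
  have hJJ : J * J = -1 := LinearMap.ext hJ2
  calc trace ℝ V f' = trace ℝ V (f' * J * -J) := by
        rw [mul_neg, mul_assoc, hJJ, mul_neg, mul_one, neg_neg]
    _ = trace ℝ V (-J * (f' * J)) := LinearMap.trace_mul_comm _ _ _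
    _ = trace ℝ V f := by
        rw [show f' * J = J * f from h, ← mul_assoc, neg_mul, hJJ, neg_neg, one_mul]

theorem ricciOf_eq_trace {ι : Type*} [Fintype ι] [DecidableEq ι] (b : Basis ι ℝ V)
    (R : V → V → V →ₗ[ℝ] V) {X Y : V} (L : V →ₗ[ℝ] V) (hL : ∀ Z : V, L Z = R Z X Y) :
    ricciOf b R X Y = trace ℝ V L := by
  simp only [trace_eq_sum_coord b, hL, ricciOf]

namespace isCurv

variable {g : LinearMap.BilinForm ℝ V} {R : V → V → V →ₗ[ℝ] V}

theorem isLinearMap_apply_left (hR : isCurv g R) (X Y : V) :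
    IsLinearMap ℝ (fun Z => R Z X Y) := by
  have hzero : R 0 X = 0 := by simpa using hR.1 1 0 0 X
  refine ⟨fun Z Z' => ?_, fun a Z => ?_⟩
  · simpa using congrArg (· Y) (hR.1 1 Z Z' X)
  · simpa [hzero] using congrArg (· Y) (hR.1 a Z 0 X)

theorem inner_apply_swap (hsymm : ∀ X Y : V, g X Y = g Y X) (hR : isCurv g R)
    (X Y Z W : V) : g (R X Y Z) W = - g (R X Y W) Z := by
  rw [hsymm _ Z, eq_neg_iff_add_eq_zero, hR.2.2.1]

theorem pair_symm (hsymm : ∀ X Y : V, g X Y = g Y X) (hR : isCurv g R) (X Y Z W : V) :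
    g (R X Y Z) W = g (R Z W X) Y := by
  have skew : ∀ X Y Z W : V, g (R X Y Z) W = - g (R Y X Z) W := fun X Y Z W => by
    rw [hR.2.1 X Y, LinearMap.neg_apply, map_neg, LinearMap.neg_apply]
  have bianchi : ∀ X Y Z W : V, g (R X Y Z) W + g (R Y Z X) W + g (R Z X Y) W = 0 := by
    intro X Y Z W
    simpa only [map_add, LinearMap.add_apply, map_zero, LinearMap.zero_apply]
      using congrArg (fun U => g U W) (hR.2.2.2 X Y Z)
  have swap := inner_apply_swap hsymm hR
  linarith [bianchi X Y Z W, bianchi Y Z W X, bianchi Z W X Y, bianchi W X Y Z,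
    swap Y Z W X, swap Z W Y X, skew W Y Z X, swap Y W Z X, skew X Z W Y, swap Z X W Y,
    swap W X Y Z, swap X Y W Z]

theorem apply_J_J (hsymm : ∀ X Y : V, g X Y = g Y X) (hnd : Nondeg g) {J : V →ₗ[ℝ] V}
    (hJg : ∀ X Y : V, g (J X) (J Y) = g X Y) (hR : isCurv g R)
    (hRJ : ∀ X Y : V, R X Y ∘ₗ J = J ∘ₗ R X Y) (X Y : V) : R (J X) (J Y) = R X Y := by
  ext U
  refine eq_of_forall_apply_eq hnd fun W => ?_
  calc g (R (J X) (J Y) U) W = g (R U W (J X)) (J Y) := hR.pair_symm hsymm _ _ _ _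
    _ = g (J (R U W X)) (J Y) := congrArg (g · (J Y)) (LinearMap.congr_fun (hRJ U W) X)
    _ = g (R X Y U) W := by rw [hJg, hR.pair_symm hsymm]

theorem ricciOf_comm {ι : Type*} [Fintype ι] [DecidableEq ι] (b : Basis ι ℝ V)
    (hsymm : ∀ X Y : V, g X Y = g Y X) (hnd : Nondeg g) (hR : isCurv g R) (X Y : V) :
    ricciOf b R X Y = ricciOf b R Y X := by
  have key : ∀ U W : V, g W (R U X Y) = g U (R W Y X) := fun U W => by
    rw [hsymm W, hR.pair_symm hsymm, hR.inner_apply_swap hsymm, hR.2.1 Y, hsymm U,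
      LinearMap.neg_apply, map_neg, LinearMap.neg_apply, neg_neg]
  simp only [ricciOf, coord_eq_sum_gramInv b hnd]
  calc ∑ i, ∑ j, gramInv g b i j * g (b j) (R (b i) X Y)
      = ∑ i, ∑ j, gramInv g b j i * g (b i) (R (b j) Y X) := by
        simp only [key, gramInv_comm b hsymm]
    _ = _ := Finset.sum_comm

theorem ricciOf_J_J {ι : Type*} [Fintype ι] [DecidableEq ι] (b : Basis ι ℝ V)
    (hsymm : ∀ X Y : V, g X Y = g Y X) (hnd : Nondeg g) {J : V →ₗ[ℝ] V}
    (hJ2 : ∀ X : V, J (J X) = -X) (hJg : ∀ X Y : V, g (J X) (J Y) = g X Y) (hR : isCurv g R)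
    (hRJ : ∀ X Y : V, R X Y ∘ₗ J = J ∘ₗ R X Y) (X Y : V) :
    ricciOf b R (J X) (J Y) = ricciOf b R X Y := by
  have := Module.Finite.of_basis b
  rw [ricciOf_eq_trace b R (IsLinearMap.mk' _ (hR.isLinearMap_apply_left (J X) (J Y)))
      fun _ => rfl, ricciOf_eq_trace b R (IsLinearMap.mk' _ (hR.isLinearMap_apply_left X Y))
      fun _ => rfl]
  refine trace_eq_of_comp_J_eq hJ2 (LinearMap.ext fun Z => ?_)
  simp only [LinearMap.comp_apply, IsLinearMap.mk'_apply, hR.apply_J_J hsymm hnd hJg hRJ]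
  exact LinearMap.congr_fun (hRJ Z X) Y

end isCurv

namespace skewAdj

variable {g : LinearMap.BilinForm ℝ V} {f f' : V →ₗ[ℝ] V}

theorem add (hf : skewAdj g f) (hf' : skewAdj g f') : skewAdj g (f + f') := fun X Y => by
  simp only [LinearMap.add_apply, map_add]
  linear_combination hf X Y + hf' X Y

theorem smul (c : ℝ) (hf : skewAdj g f) : skewAdj g (c • f) := fun X Y => by
  simp only [LinearMap.smul_apply, map_smul, smul_eq_mul]
  linear_combination c * hf X Y

end skewAdj

theorem isCurv.sub {g : LinearMap.BilinForm ℝ V} {R S : V → V → V →ₗ[ℝ] V}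
    (hR : isCurv g R) (hS : isCurv g S) : isCurv g (fun X Y => R X Y - S X Y) := by
  obtain ⟨hR1, hR2, hR3, hR4⟩ := hR
  obtain ⟨hS1, hS2, hS3, hS4⟩ := hS
  refine ⟨fun a X X' Y => ?_, fun X Y => ?_, fun X Y Z W => ?_, fun X Y Z => ?_⟩ <;> beta_reduce
  · rw [hR1, hS1]; module
  · rw [hR2, hS2]; abel
  · simp only [LinearMap.sub_apply, map_sub]
    linear_combination hR3 X Y Z W - hS3 X Y Z W
  · simp only [LinearMap.sub_apply]
    rw [← sub_eq_zero.mpr (hR4 X Y Z), ← sub_eq_zero.mpr (hS4 X Y Z)]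
    abel

theorem ricciOf_sub {ι : Type*} [Fintype ι] (b : Basis ι ℝ V) (R S : V → V → V →ₗ[ℝ] V)
    (X Y : V) :
    ricciOf b (fun X Y => R X Y - S X Y) X Y = ricciOf b R X Y - ricciOf b S X Y := by
  simp [ricciOf]

theorem skewAdj_wdg {g : LinearMap.BilinForm ℝ V} (hsymm : ∀ X Y : V, g X Y = g Y X)
    (U W : V) : skewAdj g (wdg g U W) := fun X Y => by
  simp only [wdg, LinearMap.sub_apply, LinearMap.smulRight_apply, map_sub, map_smul,
    LinearMap.sub_apply, LinearMap.smul_apply, smul_eq_mul]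
  rw [hsymm X U, hsymm X W]
  ring

theorem hwdgJ_apply (g : LinearMap.BilinForm ℝ V) (J H : V →ₗ[ℝ] V) (X Y Z : V) :
    hwdgJ g J H X Y Z =
      g (H X) Z • Y - g Y Z • H X + g (J (H X)) Z • J Y - g (J Y) Z • J (H X)
      + g X Z • H Y - g (H Y) Z • X + g (J X) Z • J (H Y) - g (J (H Y)) Z • J X
      + (2 * g (H (J X)) Y) • J Z + (2 * g (J X) Y) • J (H Z) := by
  simp only [hwdgJ, wdgJ, wdg, LinearMap.add_apply, LinearMap.sub_apply, LinearMap.smul_apply,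
    LinearMap.coe_comp, Function.comp_apply, LinearMap.smulRight_apply]
  module

theorem hwdgJ_sub (g : LinearMap.BilinForm ℝ V) (J H H' : V →ₗ[ℝ] V) (X Y : V) :
    hwdgJ g J (H - H') X Y = hwdgJ g J H X Y - hwdgJ g J H' X Y := by
  ext Z
  simp only [hwdgJ_apply, LinearMap.sub_apply, map_sub]
  module

theorem hwdgJ_smul (g : LinearMap.BilinForm ℝ V) (J H : V →ₗ[ℝ] V) (c : ℝ) (X Y : V) :
    hwdgJ g J (c • H) X Y = c • hwdgJ g J H X Y := by
  ext Z
  simp only [hwdgJ_apply, LinearMap.smul_apply, map_smul, smul_eq_mul]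
  module

theorem apply_J_left_comm {g : LinearMap.BilinForm ℝ V} (hsymm : ∀ X Y : V, g X Y = g Y X)
    {J : V →ₗ[ℝ] V} (hJ2 : ∀ X : V, J (J X) = -X) (hJg : ∀ X Y : V, g (J X) (J Y) = g X Y)
    (X Y : V) : g (J X) Y = - g (J Y) X := by
  linear_combination skewAdj_of_J hJ2 hJg X Y - hsymm X (J Y)

theorem hwdgJ_comp_J {g : LinearMap.BilinForm ℝ V} {J H : V →ₗ[ℝ] V}
    (hJ2 : ∀ X : V, J (J X) = -X) (hJg : ∀ X Y : V, g (J X) (J Y) = g X Y)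
    (hHJ : ∀ X : V, H (J X) = J (H X)) (X Y : V) : hwdgJ g J H X Y ∘ₗ J = J ∘ₗ hwdgJ g J H X Y := by
  have hJ : ∀ U Z : V, g U (J Z) = - g (J U) Z := fun U Z => by
    linear_combination skewAdj_of_J hJ2 hJg U Z
  ext Z
  simp only [LinearMap.comp_apply, hwdgJ_apply, hJ, map_add, map_sub, map_smul, map_neg,
    LinearMap.neg_apply, hJ2, hHJ]
  module

section KaehlerWedge

variable {g : LinearMap.BilinForm ℝ V} {J H : V →ₗ[ℝ] V}
  (hsymm : ∀ X Y : V, g X Y = g Y X) (hJ2 : ∀ X : V, J (J X) = -X)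
  (hJg : ∀ X Y : V, g (J X) (J Y) = g X Y) (hHs : ∀ X Y : V, g (H X) Y = g (H Y) X)
  (hHJ : ∀ X : V, H (J X) = J (H X))
include hsymm hJ2 hJg hHs hHJ

theorem skewAdj_J_comp : skewAdj g (J ∘ₗ H) := fun X Y => by
  have hJH : g (H X) (J Y) = g X (J (H Y)) := by rw [hHs, hHJ, hsymm]
  simp only [LinearMap.comp_apply]
  linear_combination skewAdj_of_J hJ2 hJg (H X) Y - hJH

theorem apply_JH_left_comm (X Y : V) : g (J (H X)) Y = - g (J (H Y)) X := by
  rw [apply_J_left_comm hsymm hJ2 hJg, ← hHJ, hHs, hsymm]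

theorem isCurv_hwdgJ : isCurv g (hwdgJ g J H) := by
  have hJ := apply_J_left_comm hsymm hJ2 hJg
  have hJH := apply_JH_left_comm hsymm hJ2 hJg hHs hHJ
  refine ⟨fun a X X' Y => ?_, fun X Y => ?_, fun X Y => ?_, fun X Y Z => ?_⟩
  · ext Z
    simp only [hwdgJ_apply, map_add, map_smul, LinearMap.add_apply, LinearMap.smul_apply,
      smul_eq_mul]
    module
  · ext Z
    simp only [hwdgJ_apply, LinearMap.neg_apply, hHJ, hJ Y X, hJH Y X]
    module
  · have hwdg := skewAdj_wdg hsymm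
    exact ((((hwdg _ _).add (hwdg _ _)).add ((hwdg _ _).add (hwdg _ _))).add
      ((skewAdj_of_J hJ2 hJg).smul _)).add
      ((skewAdj_J_comp hsymm hJ2 hJg hHs hHJ).smul _)
  · simp only [hwdgJ_apply, hHJ, hJ Y X, hJ Z X, hJ Z Y, hJH Y X, hJH Z X, hJH Z Y,
      hHs Z X, hHs Y X, hHs Z Y, hsymm Z Y, hsymm Z X, hsymm Y X]
    module

theorem ricciOf_hwdgJ {ι : Type*} [Fintype ι] [DecidableEq ι] (b : Basis ι ℝ V)
    (hnd : Nondeg g) (X Y : V) :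
    ricciOf b (hwdgJ g J H) X Y
      = -(finrank ℝ V + 4 : ℝ) * g (H X) Y - trace ℝ V H * g X Y := by
  have := Module.Finite.of_basis b
  let L : V →ₗ[ℝ] V :=
    (LinearMap.flip g Y ∘ₗ H).smulRight X - g X Y • H
    + (LinearMap.flip g Y ∘ₗ J ∘ₗ H).smulRight (J X) - g (J X) Y • (J ∘ₗ H)
    + (LinearMap.flip g Y).smulRight (H X) - g (H X) Y • LinearMap.id
    + (LinearMap.flip g Y ∘ₗ J).smulRight (J (H X)) - g (J (H X)) Y • J
    + (2 • LinearMap.flip g X ∘ₗ H ∘ₗ J).smulRight (J Y)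
    + (2 • LinearMap.flip g X ∘ₗ J).smulRight (J (H Y))
  have hL : ∀ Z, L Z = hwdgJ g J H Z X Y := fun Z => by
    simp only [L, hwdgJ_apply, LinearMap.add_apply, LinearMap.sub_apply, LinearMap.smul_apply,
      LinearMap.smulRight_apply, LinearMap.comp_apply, LinearMap.flip_apply, LinearMap.id_apply]
    module
  have htrJ := (skewAdj_of_J hJ2 hJg).trace_eq_zero hsymm hnd
  have htrJH := (skewAdj_J_comp hsymm hJ2 hJg hHs hHJ).trace_eq_zero hsymm hnd
  rw [ricciOf_eq_trace b _ L hL]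
  simp only [L, map_add, map_sub, map_smul, trace_smulRight, LinearMap.trace_id, htrJ, htrJH,
    LinearMap.comp_apply, LinearMap.flip_apply, LinearMap.smul_apply, hJ2, hHJ, map_neg,
    hHs Y X, smul_eq_mul]
  ring

end KaehlerWedge

theorem scalarOf_eq_trace {ι : Type*} [Fintype ι] [DecidableEq ι] {g : LinearMap.BilinForm ℝ V}
    (b : Basis ι ℝ V) (hsymm : ∀ X Y : V, g X Y = g Y X) (hnd : Nondeg g)
    {R : V → V → V →ₗ[ℝ] V} {A : V →ₗ[ℝ] V} (hA : ∀ X Y : V, g (A X) Y = ricciOf b R X Y) :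
    scalarOf g b R = trace ℝ V A := by
  simp only [scalarOf, trace_eq_sum_gramInv b hnd, ← hA, hsymm (A _)]

theorem isCurv.ricciEndo_comm_J {ι : Type*} [Fintype ι] [DecidableEq ι]
    {g : LinearMap.BilinForm ℝ V} {R : V → V → V →ₗ[ℝ] V} (b : Basis ι ℝ V)
    (hsymm : ∀ X Y : V, g X Y = g Y X) (hnd : Nondeg g) {J : V →ₗ[ℝ] V}
    (hJ2 : ∀ X : V, J (J X) = -X) (hJg : ∀ X Y : V, g (J X) (J Y) = g X Y) (hR : isCurv g R)
    (hRJ : ∀ X Y : V, R X Y ∘ₗ J = J ∘ₗ R X Y) {A : V →ₗ[ℝ] V}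
    (hA : ∀ X Y : V, g (A X) Y = ricciOf b R X Y) (X : V) : A (J X) = J (A X) := by
  refine eq_of_forall_apply_eq hnd fun Y => ?_
  calc g (A (J X)) Y = ricciOf b R (J (J X)) (J Y) := by
        rw [hA, hR.ricciOf_J_J b hsymm hnd hJ2 hJg hRJ]
    _ = g (J (A X)) Y := by
        rw [← hA, hJ2, map_neg, map_neg, LinearMap.neg_apply]
        linear_combination -skewAdj_of_J hJ2 hJg (A X) Y

/-- The `K` of `R = B + K ∧_J g`: up to sign, the Kähler analogue of the Schouten tensor. -/
noncomputable def kaehlerSchouten (n : ℕ) (A : V →ₗ[ℝ] V) (s : ℝ) : V →ₗ[ℝ] V :=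
  -(2 * ((n : ℝ) + 2))⁻¹ • (A - (s / (4 * ((n : ℝ) + 1))) • LinearMap.id)

section kaehlerSchouten

variable {g : LinearMap.BilinForm ℝ V} {J A : V →ₗ[ℝ] V} (n : ℕ) (s : ℝ)

theorem kaehlerSchouten_symm (hsymm : ∀ X Y : V, g X Y = g Y X)
    (hAs : ∀ X Y : V, g (A X) Y = g (A Y) X) (X Y : V) :
    g (kaehlerSchouten n A s X) Y = g (kaehlerSchouten n A s Y) X := by
  simp only [kaehlerSchouten, LinearMap.smul_apply, LinearMap.sub_apply, LinearMap.id_apply,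
    map_smul, map_sub, LinearMap.smul_apply, LinearMap.sub_apply, hAs X Y, hsymm X Y]

theorem kaehlerSchouten_comm_J (hAJ : ∀ X : V, A (J X) = J (A X)) (X : V) :
    kaehlerSchouten n A s (J X) = J (kaehlerSchouten n A s X) := by
  simp [kaehlerSchouten, hAJ]

theorem hwdgJ_kaehlerSchouten (hn : n ≠ 0) (X Y : V) :
    hwdgJ g J (kaehlerSchouten n A s) X Y
      = -(2 * ((n : ℝ) + 2))⁻¹ • hwdgJ g J (A - (s / (2 * (n : ℝ))) • LinearMap.id) X Y
        - (s / (4 * (n : ℝ) * ((n : ℝ) + 1))) • hwdgJ g J ((2 : ℝ)⁻¹ • LinearMap.id) X Y := by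
  simp only [kaehlerSchouten, hwdgJ_smul, hwdgJ_sub]
  match_scalars <;> field_simp
  ring

theorem ricciOf_sub_hwdgJ_kaehlerSchouten {ι : Type*} [Fintype ι] [DecidableEq ι]
    (b : Basis ι ℝ V) (hsymm : ∀ X Y : V, g X Y = g Y X) (hnd : Nondeg g)
    (hJ2 : ∀ X : V, J (J X) = -X) (hJg : ∀ X Y : V, g (J X) (J Y) = g X Y)
    (hdim : finrank ℝ V = 2 * n) {R : V → V → V →ₗ[ℝ] V}
    (hA : ∀ X Y : V, g (A X) Y = ricciOf b R X Y) (hAs : ∀ X Y : V, g (A X) Y = g (A Y) X)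
    (hAJ : ∀ X : V, A (J X) = J (A X)) (X Y : V) :
    ricciOf b (fun X Y => R X Y - hwdgJ g J (kaehlerSchouten n A (trace ℝ V A)) X Y) X Y
      = 0 := by
  have := Module.Finite.of_basis b
  rw [ricciOf_sub, ricciOf_hwdgJ hsymm hJ2 hJg (kaehlerSchouten_symm n _ hsymm hAs)
    (kaehlerSchouten_comm_J n _ hAJ) b hnd, ← hA]
  simp only [kaehlerSchouten, LinearMap.smul_apply, LinearMap.sub_apply, LinearMap.id_apply,
    map_smul, map_sub, LinearMap.trace_id, hdim, smul_eq_mul]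
  push_cast
  field_simp
  ring

end kaehlerSchouten

theorem stmt_17 (n : ℕ) (hn : 2 ≤ n) (g : LinearMap.BilinForm ℝ V)
    (hsymm : ∀ X Y : V, g X Y = g Y X) (hnd : Nondeg g)
    (J : V →ₗ[ℝ] V) (hJ2 : ∀ X : V, J (J X) = -X)
    (hJg : ∀ X Y : V, g (J X) (J Y) = g X Y)
    (b : Basis (Fin (2 * n)) ℝ V)
    (R : V → V → V →ₗ[ℝ] V) (hR : isCurv g R)
    (hRJ : ∀ X Y : V, R X Y ∘ₗ J = J ∘ₗ R X Y)
    (A : V →ₗ[ℝ] V) (hA : ∀ X Y : V, g (A X) Y = ricciOf b R X Y) :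
    ∃! B : V → V → V →ₗ[ℝ] V,
      isCurv g B ∧ (∀ X Y : V, B X Y ∘ₗ J = J ∘ₗ B X Y) ∧
      (∀ X Y : V, ricciOf b B X Y = 0) ∧
      (∀ X Y : V, R X Y = B X Y
        - (2 * ((n : ℝ) + 2))⁻¹ •
            hwdgJ g J (A - (scalarOf g b R / (2 * (n : ℝ))) • (LinearMap.id : V →ₗ[ℝ] V)) X Y
        - (scalarOf g b R / (4 * (n : ℝ) * ((n : ℝ) + 1))) •
            hwdgJ g J ((2 : ℝ)⁻¹ • (LinearMap.id : V →ₗ[ℝ] V)) X Y) ∧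
      (∀ X Y : V, R X Y = B X Y
        + hwdgJ g J (-(2 * ((n : ℝ) + 2))⁻¹ •
            (A - (scalarOf g b R / (4 * ((n : ℝ) + 1))) • (LinearMap.id : V →ₗ[ℝ] V))) X Y) := by
  have hAs : ∀ X Y : V, g (A X) Y = g (A Y) X := fun X Y => by
    rw [hA, hA, hR.ricciOf_comm b hsymm hnd]
  have hAJ := hR.ricciEndo_comm_J b hsymm hnd hJ2 hJg hRJ hA
  have hs := scalarOf_eq_trace b hsymm hnd hA
  refine ⟨fun X Y => R X Y - hwdgJ g J (kaehlerSchouten n A (scalarOf g b R)) X Y,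
    ⟨hR.sub (isCurv_hwdgJ hsymm hJ2 hJg (kaehlerSchouten_symm n _ hsymm hAs)
      (kaehlerSchouten_comm_J n _ hAJ)), fun X Y => ?_, fun X Y => ?_, fun X Y => ?_,
      fun X Y => (sub_add_cancel _ _).symm⟩,
    fun B hB => funext₂ fun X Y => eq_sub_of_add_eq (hB.2.2.2.2 X Y).symm⟩
  · rw [LinearMap.sub_comp, LinearMap.comp_sub, hRJ,
      hwdgJ_comp_J hJ2 hJg (kaehlerSchouten_comm_J n _ hAJ)]
  · rw [hs]
    exact ricciOf_sub_hwdgJ_kaehlerSchouten n b hsymm hnd hJ2 hJg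
      (by rw [finrank_eq_card_basis b, Fintype.card_fin]) hA hAs hAJ X Y
  · beta_reduce
    rw [hwdgJ_kaehlerSchouten n _ (by omega)]
    module
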